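/- Let K be a compact Hausdorff space and (f_n) a bounded sequence in C(K), the real Banach space of continuous functions on K with the supremum norm. Then: (i) δ(f_n) = sup_{x∈K} inf_{n∈ℕ} sup_{i,j≥n} |f_i(x) − f_j(x)|; and (ii) for every finite regular Borel measure μ on K and every ε > 0 there exists a compact set L ⊆ K with μ(K∖L) ≤ ε such that inf_{n∈ℕ} sup_{i,j≥n} sup_{x∈L} |f_i(x) − f_j(x)| ≤ δ(f_n). -/

import Mathlib

open Metric NormedSpace Filter Topology Set

noncomputable section

/-- A subset of a Banach space is weakly compact if it is compact in the weak topology. -/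
def IsWeaklyCompact {Z : Type*} [NormedAddCommGroup Z] [NormedSpace ℝ Z] (K : Set Z) : Prop :=
  IsCompact (toWeakSpace ℝ Z '' K)

/-- `ca (x_k) = inf_n sup_{i,j ≥ n} ‖x_i - x_j‖`. -/
def ca {Z : Type*} [NormedAddCommGroup Z] (x : ℕ → Z) : ℝ :=
  ⨅ n : ℕ, sSup {r : ℝ | ∃ i j : ℕ, n ≤ i ∧ n ≤ j ∧ r = ‖x i - x j‖}

/-- `wca` is the infimum of `ca` over all subsequences. -/
def wca {Z : Type*} [NormedAddCommGroup Z] (x : ℕ → Z) : ℝ :=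
  ⨅ φ : {φ : ℕ → ℕ // StrictMono φ}, ca (x ∘ φ)

/-- A sequence is weakly Cauchy if `(x*(x_k))` converges for every functional `x*`. -/
def WeaklyCauchy {Z : Type*} [NormedAddCommGroup Z] [NormedSpace ℝ Z] (x : ℕ → Z) : Prop :=
  ∀ f : StrongDual ℝ Z, ∃ l : ℝ, Tendsto (fun n => f (x n)) atTop (nhds l)

/-- A sequence is weakly null if `x*(x_k) → 0` for every functional `x*`. -/
def WeaklyNull {Z : Type*} [NormedAddCommGroup Z] [NormedSpace ℝ Z] (x : ℕ → Z) : Prop :=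
  ∀ f : StrongDual ℝ Z, Tendsto (fun n => f (x n)) atTop (nhds 0)

/-- `cc T`: measure of non-complete-continuity of an operator. -/
def cc {X Y : Type*} [NormedAddCommGroup X] [NormedSpace ℝ X]
    [NormedAddCommGroup Y] [NormedSpace ℝ Y] (T : X →L[ℝ] Y) : ℝ :=
  sSup {r : ℝ | ∃ x : ℕ → X, (∀ n, ‖x n‖ ≤ 1) ∧ WeaklyCauchy x ∧
    r = ca (fun n => T (x n))}

/-- Non-symmetrized Hausdorff distance `d̂(A,B) = sup_{a ∈ A} dist(a, B)`. -/
def dhat {Z : Type*} [NormedAddCommGroup Z] (A B : Set Z) : ℝ :=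
  ⨆ a : A, infDist (a : Z) B

/-- de Blasi measure of weak non-compactness. -/
def deBlasiOmega {Z : Type*} [NormedAddCommGroup Z] [NormedSpace ℝ Z] (A : Set Z) : ℝ :=
  ⨅ K : {K : Set Z // K.Nonempty ∧ IsWeaklyCompact K}, dhat A K

/-- Hausdorff measure of non-compactness. -/
def hausdorffChi {Z : Type*} [NormedAddCommGroup Z] (A : Set Z) : ℝ :=
  ⨅ F : {F : Set Z // F.Finite ∧ F.Nonempty}, dhat A F

/-- weak* closure of a set of functionals. -/
def wstarClosure {E : Type*} [NormedAddCommGroup E] [NormedSpace ℝ E]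
    (A : Set (StrongDual ℝ E)) : Set (StrongDual ℝ E) :=
  StrongDual.toWeakDual ⁻¹' closure (StrongDual.toWeakDual '' A)

/-- `wk_Z(A) = d̂(cl_{w*}(ι(A)), ι(Z))` in the bidual. -/
def wkMeasure {Z : Type*} [NormedAddCommGroup Z] [NormedSpace ℝ Z] (A : Set Z) : ℝ :=
  dhat (wstarClosure ((inclusionInDoubleDual ℝ Z) '' A))
    (Set.range (inclusionInDoubleDual ℝ Z))

/-- `z` is a weak* cluster point of the sequence `u` of functionals. -/
def IsWeakStarClusterPt {E : Type*} [NormedAddCommGroup E] [NormedSpace ℝ E]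
    (z : StrongDual ℝ E) (u : ℕ → StrongDual ℝ E) : Prop :=
  MapClusterPt (StrongDual.toWeakDual z) atTop (fun n => StrongDual.toWeakDual (u n))

/-- `wck(A)`. -/
def wck {Z : Type*} [NormedAddCommGroup Z] [NormedSpace ℝ Z] (A : Set Z) : ℝ :=
  sSup {r : ℝ | ∃ x : ℕ → Z, (∀ n, x n ∈ A) ∧
    r = sInf {s : ℝ | ∃ (z : StrongDual ℝ (StrongDual ℝ Z)) (x₀ : Z),
      IsWeakStarClusterPt z (fun n => inclusionInDoubleDual ℝ Z (x n)) ∧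
      s = ‖z - inclusionInDoubleDual ℝ Z x₀‖}}

/-- `ca_ρ` of a sequence. -/
def caRho {Z : Type*} [NormedAddCommGroup Z] [NormedSpace ℝ Z] (x : ℕ → Z) : ℝ :=
  ⨆ K : {K : Set (StrongDual ℝ Z) // K ⊆ closedBall 0 1 ∧ IsWeaklyCompact K},
    ⨅ n : ℕ, sSup {r : ℝ | ∃ i j : ℕ, n ≤ i ∧ n ≤ j ∧
      ∃ f ∈ K.1, r = |f (x i) - f (x j)|}

/-- `wca_ρ` of a sequence. -/
def wcaRho {Z : Type*} [NormedAddCommGroup Z] [NormedSpace ℝ Z] (x : ℕ → Z) : ℝ :=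
  ⨅ φ : {φ : ℕ → ℕ // StrictMono φ}, caRho (x ∘ φ)

/-- `ca_{ρ*}` of a sequence in a dual space. -/
def caRhoStar {Z : Type*} [NormedAddCommGroup Z] [NormedSpace ℝ Z]
    (x : ℕ → StrongDual ℝ Z) : ℝ :=
  ⨆ K : {K : Set Z // K ⊆ closedBall 0 1 ∧ IsWeaklyCompact K},
    ⨅ n : ℕ, sSup {r : ℝ | ∃ i j : ℕ, n ≤ i ∧ n ≤ j ∧
      ∃ v ∈ K.1, r = |x i v - x j v|}

/-- `wca_{ρ*}` of a sequence in a dual space. -/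
def wcaRhoStar {Z : Type*} [NormedAddCommGroup Z] [NormedSpace ℝ Z]
    (x : ℕ → StrongDual ℝ Z) : ℝ :=
  ⨅ φ : {φ : ℕ → ℕ // StrictMono φ}, caRhoStar (x ∘ φ)

/-- `δ(x_k)`. -/
def deltaSeq {Z : Type*} [NormedAddCommGroup Z] [NormedSpace ℝ Z] (x : ℕ → Z) : ℝ :=
  ⨆ f : (closedBall (0 : StrongDual ℝ Z) 1),
    ⨅ n : ℕ, sSup {r : ℝ | ∃ i j : ℕ, n ≤ i ∧ n ≤ j ∧
      r = |(f : StrongDual ℝ Z) (x i) - (f : StrongDual ℝ Z) (x j)|}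

/-- The adjoint of a bounded operator between Banach spaces. -/
def adjointOp {X Y : Type*} [NormedAddCommGroup X] [NormedSpace ℝ X]
    [NormedAddCommGroup Y] [NormedSpace ℝ Y] (T : X →L[ℝ] Y) :
    StrongDual ℝ Y →L[ℝ] StrongDual ℝ X :=
  (ContinuousLinearMap.compL ℝ X Y ℝ).flip T

/-! (i) Point evaluations lie in the unit ball of `C(K)*`, which gives `≥`. Conversely, if the
oscillation of `(φ (f n))` exceeds `c`, choose `i n, j n ≥ n` with `φ (f (i n) - f (j n)) > c`.
Then `φ > c` on the closed convex hull of `g n = f (i n) - f (j n)`, so every element of it has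
norm `> c`, and Simons' inequality for the boundary `{±δ_x}` of the dual ball yields a point `x`
with `|g n x| ≥ c` infinitely often.

(ii) The tail oscillations `x ↦ sup_{i,j ≥ n} |f i x - f j x|` are measurable and decrease to the
pointwise oscillation, which is at most `δ(f_n)`. Egorov's theorem and inner regularity give a
compact `L` of almost full measure on which this convergence is uniform. -/

theorem Convex.mem_of_hasSum_smul {E : Type*} [NormedAddCommGroup E] [NormedSpace ℝ E]
    {C : Set E} (hC : Convex ℝ C) (hCc : IsClosed C) {ι : Type*} {w : ι → ℝ}
    (hw : ∀ i, 0 ≤ w i) (hw1 : HasSum w 1) {h : ι → E} (hh : ∀ i, h i ∈ C) {u : E}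
    (hu : HasSum (fun i => w i • h i) u) : u ∈ C := by
  by_contra hu_notin
  obtain ⟨φ, c, hφC, hcu⟩ := geometric_hahn_banach_closed_point hC hCc hu_notin
  have hφu : HasSum (fun i => w i * φ (h i)) (φ u) := by simpa using φ.hasSum hu
  have hc : HasSum (fun i => w i * c) c := by simpa using hw1.mul_right c
  have := hasSum_le (fun i => mul_le_mul_of_nonneg_left (hφC _ (hh i)).le (hw i)) hφu hc
  linarith

section Simons

variable {E : Type*} [NormedAddCommGroup E] [NormedSpace ℝ E]

def tailHull (g : ℕ → E) (n : ℕ) : Set E := closedConvexHull ℝ (g '' Ici n)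

variable {g : ℕ → E}

theorem mem_tailHull_self (n : ℕ) : g n ∈ tailHull g n :=
  subset_closedConvexHull (mem_image_of_mem g self_mem_Ici)

theorem tailHull_anti : Antitone (tailHull g) := fun _ _ hmn =>
  (closedConvexHull ℝ).monotone (image_mono (Ici_subset_Ici.mpr hmn))

theorem tailHull_zero : tailHull g 0 = closedConvexHull ℝ (range g) := by
  rw [tailHull, Ici_zero_eq_univ, image_univ]

theorem apply_le_of_mem_tailHull (φ : StrongDual ℝ E) {n : ℕ} {c : ℝ}
    (hφ : ∀ k, n ≤ k → φ (g k) ≤ c) {h : E} (hh : h ∈ tailHull g n) : φ h ≤ c :=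
  closedConvexHull_min (by rintro _ ⟨k, hk, rfl⟩; exact hφ k hk)
    (convex_halfSpace_le φ.isLinear c) (isClosed_le φ.continuous continuous_const) hh

theorem norm_le_of_mem_tailHull {M : ℝ} (hM : ∀ k, ‖g k‖ ≤ M) {n : ℕ} {h : E}
    (hh : h ∈ tailHull g n) : ‖h‖ ≤ M :=
  mem_closedBall_zero_iff.mp <| closedConvexHull_min
    (by rintro _ ⟨k, -, rfl⟩; exact mem_closedBall_zero_iff.mpr (hM k))
    (convex_closedBall 0 M) isClosed_closedBall hh

theorem exists_seq_almost_minimizing (g : ℕ → E) {η : ℕ → ℝ} (hη : ∀ n, 0 < η n) :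
    ∃ G : ℕ → E, (∀ n, G n ∈ tailHull g n) ∧ ∀ n, ∀ w ∈ tailHull g n,
      ‖∑ k ∈ Finset.range n, (2⁻¹ : ℝ) ^ (k + 1) • G k + (2⁻¹ : ℝ) ^ n • G n‖ ≤
        ‖∑ k ∈ Finset.range n, (2⁻¹ : ℝ) ^ (k + 1) • G k + (2⁻¹ : ℝ) ^ n • w‖ + η n := by
  have hsel : ∀ n (p : E), ∃ v ∈ tailHull g n, ∀ w ∈ tailHull g n,
      ‖p + (2⁻¹ : ℝ) ^ n • v‖ ≤ ‖p + (2⁻¹ : ℝ) ^ n • w‖ + η n := by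
    intro n p
    have : Nonempty (tailHull g n) := ⟨⟨g n, mem_tailHull_self n⟩⟩
    have hbdd : BddBelow (range fun w : tailHull g n => ‖p + (2⁻¹ : ℝ) ^ n • (w : E)‖) :=
      ⟨0, by rintro _ ⟨w, rfl⟩; exact norm_nonneg _⟩
    obtain ⟨v, hv⟩ := exists_lt_of_ciInf_lt (lt_add_of_pos_right
      (⨅ w : tailHull g n, ‖p + (2⁻¹ : ℝ) ^ n • (w : E)‖) (hη n))
    exact ⟨v, v.2, fun w hw => hv.le.trans (by gcongr; exact ciInf_le hbdd ⟨w, hw⟩)⟩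
  choose sel hsel_mem hsel_le using hsel
  let p : ℕ → E := fun n => Nat.rec 0 (fun m q => q + (2⁻¹ : ℝ) ^ (m + 1) • sel m q) n
  have hp : ∀ n, p n = ∑ k ∈ Finset.range n, (2⁻¹ : ℝ) ^ (k + 1) • sel k (p k) := by
    intro n
    induction n with
    | zero => rfl
    | succ n ih => rw [Finset.sum_range_succ, ← ih]
  refine ⟨fun n => sel n (p n), fun n => hsel_mem n _, fun n w hw => ?_⟩
  rw [← hp n]
  exact hsel_le n _ w hw

theorem exists_tsum_eq_add_smul_mem_tailHull [CompleteSpace E] {M : ℝ} (hM : ∀ k, ‖g k‖ ≤ M)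
    {G : ℕ → E} (hG : ∀ n, G n ∈ tailHull g n) (n : ℕ) :
    ∃ u ∈ tailHull g n, ∑' k, (2⁻¹ : ℝ) ^ (k + 1) • G k =
      ∑ k ∈ Finset.range n, (2⁻¹ : ℝ) ^ (k + 1) • G k + (2⁻¹ : ℝ) ^ n • u := by
  have hQsum : HasSum (fun k => (2⁻¹ : ℝ) ^ (k + 1)) 1 := by
    simpa [pow_succ, div_eq_mul_inv, mul_comm] using hasSum_geometric_two' 1
  have hsummable : ∀ m, Summable fun k => (2⁻¹ : ℝ) ^ (k + 1) • G (k + m) := fun m =>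
    Summable.of_norm_bounded (hQsum.summable.mul_right M) fun k => by
      rw [norm_smul, Real.norm_of_nonneg (by positivity)]
      exact mul_le_mul_of_nonneg_left (norm_le_of_mem_tailHull hM (hG _)) (by positivity)
  refine ⟨∑' k, (2⁻¹ : ℝ) ^ (k + 1) • G (k + n), ?_, ?_⟩
  · exact Convex.mem_of_hasSum_smul convex_closedConvexHull isClosed_closedConvexHull
      (fun k => by positivity) hQsum (fun k => tailHull_anti (Nat.le_add_left n k) (hG _))
      (hsummable n).hasSum
  · have hsum : Summable fun k => (2⁻¹ : ℝ) ^ (k + 1) • G k := by simpa using hsummable 0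
    rw [← hsum.sum_add_tsum_nat_add n, ← (hsummable n).tsum_const_smul]
    simp only [smul_smul, ← pow_add]
    congr 2 with k
    ring_nf

/- `s = ∑ 2⁻⁽ᵏ⁺¹⁾ G k`, where `G n` almost minimises `‖p n + 2⁻ⁿ w‖` over the tail hull and
`p n` are the partial sums. For `b` norming `s`, this near-minimality bounds `b (G n)` from above,
so `‖s‖ - b (p n)` stays above `2⁻ⁿ (‖s‖ - ε)`; but `s - p n = 2⁻ⁿ u` with `u` in the `n`-th tail
hull, where `b ≤ d - ε` if `b (g k) < d - ε` eventually. -/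
theorem simons_inequality [CompleteSpace E] {B : Set (StrongDual ℝ E)}
    (hB_le : ∀ b ∈ B, ∀ x, b x ≤ ‖x‖) (hB_norm : ∀ x, ∃ b ∈ B, b x = ‖x‖)
    {M : ℝ} (hM : ∀ k, ‖g k‖ ≤ M) {d : ℝ} (hd : ∀ h ∈ closedConvexHull ℝ (range g), d ≤ ‖h‖)
    {ε : ℝ} (hε : 0 < ε) : ∃ b ∈ B, ∃ᶠ k in atTop, d - ε ≤ b (g k) := by
  obtain ⟨G, hG, hG_min⟩ := exists_seq_almost_minimizing g
    (η := fun n => ε * (2⁻¹ : ℝ) ^ (2 * n + 1)) (fun n => by positivity)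
  have hsplit := exists_tsum_eq_add_smul_mem_tailHull hM hG
  set Q : ℝ := 2⁻¹ with hQ
  set p : ℕ → E := fun n => ∑ k ∈ Finset.range n, Q ^ (k + 1) • G k with hp
  set s : E := ∑' k, Q ^ (k + 1) • G k
  obtain ⟨b, hbB, hbs⟩ := hB_norm s
  have hstep : ∀ n, b (p n) + Q ^ n * b (G n) ≤ ‖s‖ + ε * Q ^ (2 * n + 1) := by
    intro n
    obtain ⟨u, hu, hsu⟩ := hsplit n
    calc b (p n) + Q ^ n * b (G n) = b (p n + Q ^ n • G n) := by simp
      _ ≤ ‖p n + Q ^ n • G n‖ := hB_le b hbB _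
      _ ≤ ‖p n + Q ^ n • u‖ + ε * Q ^ (2 * n + 1) := hG_min n u hu
      _ = ‖s‖ + ε * Q ^ (2 * n + 1) := by rw [hsu]
  have hinv : ∀ n, Q ^ n * (‖s‖ - ε) + ε * Q ^ (2 * n) ≤ ‖s‖ - b (p n) := by
    intro n
    induction n with
    | zero => simp [hp]
    | succ n ih =>
      have hpn : b (p (n + 1)) = b (p n) + Q ^ (n + 1) * b (G n) := by
        simp [hp, Finset.sum_range_succ]
      have hQ1 : Q ^ (n + 1) = Q ^ n / 2 := by rw [pow_succ, hQ]; ring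
      have hQ2 : Q ^ (2 * (n + 1)) = Q ^ (2 * n) / 4 := by rw [mul_add, pow_add, hQ]; ring
      have hQ3 : Q ^ (2 * n + 1) = Q ^ (2 * n) / 2 := by rw [pow_succ, hQ]; ring
      have := hstep n
      rw [hQ3] at this
      rw [hpn, hQ1, hQ2]
      linear_combination ih / 2 + this / 2
  have hds : d ≤ ‖s‖ := by
    obtain ⟨u, hu, hsu⟩ := hsplit 0
    simp only [Finset.range_zero, Finset.sum_empty, pow_zero, one_smul, zero_add] at hsu
    rw [← hsu, tailHull_zero] at hu
    exact hd s hu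
  refine ⟨b, hbB, ?_⟩
  by_contra hfreq
  obtain ⟨N, hN⟩ := eventually_atTop.mp (not_frequently.mp hfreq)
  obtain ⟨u, hu, hsu⟩ := hsplit N
  have hbu : b u ≤ d - ε := apply_le_of_mem_tailHull b (fun k hk => (not_le.mp (hN k hk)).le) hu
  have hs_le : ‖s‖ ≤ b (p N) + Q ^ N * (d - ε) := by
    calc ‖s‖ = b (p N) + Q ^ N * b u := by rw [← hbs, hsu]; simp [hp]
      _ ≤ b (p N) + Q ^ N * (d - ε) := by gcongr
  have hQN : 0 < Q ^ N := by positivity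
  have := hinv N
  rw [pow_mul'] at this
  nlinarith [mul_le_mul_of_nonneg_left hds hQN.le, mul_pos hε (pow_pos hQN 2)]

end Simons

theorem ContinuousMap.exists_frequently_le_abs {K : Type*} [TopologicalSpace K] [CompactSpace K]
    [Nonempty K] {g : ℕ → C(K, ℝ)} {M : ℝ} (hM : ∀ k, ‖g k‖ ≤ M) {d : ℝ}
    (hd : ∀ h ∈ closedConvexHull ℝ (range g), d ≤ ‖h‖) {ε : ℝ} (hε : 0 < ε) :
    ∃ x : K, ∃ᶠ k in atTop, d - ε ≤ |g k x| := by
  let B : Set (StrongDual ℝ C(K, ℝ)) :=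
    {b | ∃ x, b = ContinuousMap.evalCLM ℝ x ∨ b = -ContinuousMap.evalCLM ℝ x}
  have hB_abs : ∀ b ∈ B, ∃ x, ∀ h : C(K, ℝ), b h ≤ |h x| := by
    rintro b ⟨x, rfl | rfl⟩
    · exact ⟨x, fun h => le_abs_self (h x)⟩
    · exact ⟨x, fun h => neg_le_abs (h x)⟩
  have hB_le : ∀ b ∈ B, ∀ h : C(K, ℝ), b h ≤ ‖h‖ := fun b hb h => by
    obtain ⟨x, hx⟩ := hB_abs b hb
    exact (hx h).trans (h.norm_coe_le_norm x)
  have hB_norm : ∀ h : C(K, ℝ), ∃ b ∈ B, b h = ‖h‖ := by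
    intro h
    obtain ⟨x, -, hx⟩ := isCompact_univ.exists_isMaxOn univ_nonempty
      (continuous_norm.comp h.continuous).continuousOn
    have hnorm : ‖h‖ = |h x| :=
      le_antisymm ((h.norm_le (norm_nonneg _)).mpr fun y => hx (mem_univ y))
        (h.norm_coe_le_norm x)
    rcases abs_choice (h x) with hpos | hneg
    · exact ⟨_, ⟨x, Or.inl rfl⟩, by simp [hnorm, hpos]⟩
    · exact ⟨_, ⟨x, Or.inr rfl⟩, by simp [hnorm, hneg]⟩
  obtain ⟨b, hb, hfreq⟩ := simons_inequality hB_le hB_norm hM hd hε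
  obtain ⟨x, hx⟩ := hB_abs b hb
  exact ⟨x, hfreq.mono fun k hk => hk.trans (hx (g k))⟩

section Oscillation

variable (u : ℕ → ℝ)

def tailOsc (n : ℕ) : ℝ := sSup {r : ℝ | ∃ i j : ℕ, n ≤ i ∧ n ≤ j ∧ r = |u i - u j|}

-- `deltaSeq x` unfolds to `⨆ φ, limOsc (φ ∘ x)`, the right side of (i) to `⨆ x, limOsc (f · x)`.
def limOsc : ℝ := ⨅ n, tailOsc u n

variable {u} {C : ℝ}

theorem tailOsc_nonneg (n : ℕ) : 0 ≤ tailOsc u n :=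
  Real.sSup_nonneg (by rintro _ ⟨i, j, -, -, rfl⟩; exact abs_nonneg _)

theorem abs_sub_le_of_forall_abs_le (hC : ∀ k, |u k| ≤ C) (i j : ℕ) : |u i - u j| ≤ 2 * C :=
  (abs_sub _ _).trans (by linarith [hC i, hC j])

theorem tailOsc_le (hC : ∀ k, |u k| ≤ C) (n : ℕ) : tailOsc u n ≤ 2 * C :=
  Real.sSup_le (by rintro _ ⟨i, j, -, -, rfl⟩; exact abs_sub_le_of_forall_abs_le hC i j)
    (by linarith [(abs_nonneg (u 0)).trans (hC 0)])

theorem bddAbove_tailOsc_set (hC : ∀ k, |u k| ≤ C) (n : ℕ) :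
    BddAbove {r : ℝ | ∃ i j : ℕ, n ≤ i ∧ n ≤ j ∧ r = |u i - u j|} :=
  ⟨2 * C, by rintro _ ⟨i, j, -, -, rfl⟩; exact abs_sub_le_of_forall_abs_le hC i j⟩

theorem abs_sub_le_tailOsc (hC : ∀ k, |u k| ≤ C) {n i j : ℕ} (hi : n ≤ i) (hj : n ≤ j) :
    |u i - u j| ≤ tailOsc u n :=
  le_csSup (bddAbove_tailOsc_set hC n) ⟨i, j, hi, hj, rfl⟩

theorem tailOsc_antitone (hC : ∀ k, |u k| ≤ C) : Antitone (tailOsc u) := fun m n hmn =>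
  csSup_le_csSup (bddAbove_tailOsc_set hC m) ⟨0, n, n, le_rfl, le_rfl, by simp⟩
    fun _ ⟨i, j, hi, hj, hr⟩ => ⟨i, j, hmn.trans hi, hmn.trans hj, hr⟩

theorem limOsc_nonneg : 0 ≤ limOsc u := Real.iInf_nonneg tailOsc_nonneg

theorem bddBelow_range_tailOsc : BddBelow (range (tailOsc u)) :=
  ⟨0, by rintro _ ⟨n, rfl⟩; exact tailOsc_nonneg n⟩

theorem limOsc_le_tailOsc (n : ℕ) : limOsc u ≤ tailOsc u n :=
  ciInf_le bddBelow_range_tailOsc n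

theorem limOsc_le (hC : ∀ k, |u k| ≤ C) : limOsc u ≤ 2 * C :=
  (limOsc_le_tailOsc 0).trans (tailOsc_le hC 0)

theorem tendsto_tailOsc (hC : ∀ k, |u k| ≤ C) : Tendsto (tailOsc u) atTop (𝓝 (limOsc u)) :=
  tendsto_atTop_ciInf (tailOsc_antitone hC) bddBelow_range_tailOsc

theorem exists_lt_sub_of_lt_limOsc {c : ℝ} (h : c < limOsc u) (n : ℕ) :
    ∃ i j, n ≤ i ∧ n ≤ j ∧ c < u i - u j := by
  obtain ⟨_, ⟨i, j, hi, hj, rfl⟩, hc⟩ := exists_lt_of_lt_csSup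
    (s := {r : ℝ | ∃ i j : ℕ, n ≤ i ∧ n ≤ j ∧ r = |u i - u j|})
    ⟨0, n, n, le_rfl, le_rfl, by simp⟩ (h.trans_le (limOsc_le_tailOsc n))
  rcases abs_choice (u i - u j) with habs | habs
  · exact ⟨i, j, hi, hj, habs ▸ hc⟩
  · exact ⟨j, i, hj, hi, by linarith⟩

theorem le_limOsc (hC : ∀ k, |u k| ≤ C) {a : ℝ}
    (h : ∀ n, ∃ i j, n ≤ i ∧ n ≤ j ∧ a ≤ |u i - u j|) : a ≤ limOsc u :=
  le_ciInf fun n => by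
    obtain ⟨i, j, hi, hj, hij⟩ := h n
    exact hij.trans (abs_sub_le_tailOsc hC hi hj)

theorem measurable_tailOsc {α : Type*} [MeasurableSpace α] {f : ℕ → α → ℝ}
    (hf : ∀ k, Measurable (f k)) (n : ℕ) : Measurable fun x => tailOsc (fun k => f k x) n := by
  have htail : (fun x => tailOsc (fun k => f k x) n) =
      fun x => ⨆ p : {p : ℕ × ℕ // n ≤ p.1 ∧ n ≤ p.2}, |f p.1.1 x - f p.1.2 x| := by
    ext x
    simp only [tailOsc, iSup]
    congr 1
    ext r
    constructor
    · rintro ⟨i, j, hi, hj, rfl⟩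
      exact ⟨⟨(i, j), hi, hj⟩, rfl⟩
    · rintro ⟨⟨⟨i, j⟩, hi, hj⟩, rfl⟩
      exact ⟨i, j, hi, hj, rfl⟩
  rw [htail]
  exact Measurable.iSup fun p => ((hf _).sub (hf _)).abs

end Oscillation

section DeltaSeq

variable {E : Type*} [NormedAddCommGroup E] [NormedSpace ℝ E]

theorem abs_apply_le_of_norm_le_one {φ : StrongDual ℝ E} (hφ : ‖φ‖ ≤ 1) (x : E) :
    |φ x| ≤ ‖x‖ := by
  simpa using φ.le_of_opNorm_le hφ x

theorem deltaSeq_nonneg (x : ℕ → E) : 0 ≤ deltaSeq x :=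
  Real.iSup_nonneg fun _ => limOsc_nonneg

theorem limOsc_apply_le_deltaSeq {x : ℕ → E} {M : ℝ} (hM : ∀ k, ‖x k‖ ≤ M)
    {φ : StrongDual ℝ E} (hφ : ‖φ‖ ≤ 1) : limOsc (fun k => φ (x k)) ≤ deltaSeq x := by
  refine le_ciSup (f := fun ψ : closedBall (0 : StrongDual ℝ E) 1 =>
    limOsc fun k => (ψ : StrongDual ℝ E) (x k)) ⟨2 * M, ?_⟩ ⟨φ, mem_closedBall_zero_iff.mpr hφ⟩
  rintro _ ⟨ψ, rfl⟩
  exact limOsc_le fun k =>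
    (abs_apply_le_of_norm_le_one (mem_closedBall_zero_iff.mp ψ.2) _).trans (hM k)

end DeltaSeq

section ContinuousFunctions

variable {K : Type*} [TopologicalSpace K] [CompactSpace K] {f : ℕ → C(K, ℝ)} {M : ℝ}

theorem ContinuousMap.norm_evalCLM_le (x : K) :
    ‖(ContinuousMap.evalCLM ℝ x : C(K, ℝ) →L[ℝ] ℝ)‖ ≤ 1 :=
  ContinuousLinearMap.opNorm_le_bound _ zero_le_one fun h => by
    simpa using h.norm_coe_le_norm x

theorem abs_apply_le_of_norm_le (hM : ∀ k, ‖f k‖ ≤ M) (x : K) (k : ℕ) : |f k x| ≤ M :=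
  ((f k).norm_coe_le_norm x).trans (hM k)

theorem limOsc_eval_le_deltaSeq (hM : ∀ k, ‖f k‖ ≤ M) (x : K) :
    limOsc (fun k => f k x) ≤ deltaSeq f := by
  simpa using limOsc_apply_le_deltaSeq hM (ContinuousMap.norm_evalCLM_le x)

theorem limOsc_apply_le_iSup_limOsc_eval (hM : ∀ k, ‖f k‖ ≤ M)
    {φ : StrongDual ℝ C(K, ℝ)} (hφ : ‖φ‖ ≤ 1) :
    limOsc (fun k => φ (f k)) ≤ ⨆ x, limOsc fun k => f k x := by
  rcases isEmpty_or_nonempty K with hK | hK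
  · have hf : ∀ k, f k = 0 := fun k => ContinuousMap.ext isEmptyElim
    simpa using limOsc_le (u := fun k => φ (f k)) (C := 0) fun k => by simp [hf]
  refine le_of_forall_pos_le_add fun ε hε => ?_
  set c := limOsc fun k => φ (f k)
  choose I J hI hJ hIJ using exists_lt_sub_of_lt_limOsc (sub_lt_self c (half_pos hε))
  set g : ℕ → C(K, ℝ) := fun n => f (I n) - f (J n)
  have hgM : ∀ n, ‖g n‖ ≤ 2 * M := fun n =>
    (norm_sub_le _ _).trans (by linarith [hM (I n), hM (J n)])
  have hd : ∀ h ∈ closedConvexHull ℝ (range g), c - ε / 2 ≤ ‖h‖ := fun h hh =>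
    (closedConvexHull_min (t := {h | c - ε / 2 ≤ φ h})
      (by rintro _ ⟨n, rfl⟩; simpa [g] using (hIJ n).le) (convex_halfSpace_ge φ.isLinear _)
      (isClosed_le continuous_const φ.continuous) hh).trans
      ((le_abs_self _).trans (abs_apply_le_of_norm_le_one hφ h))
  obtain ⟨x, hx⟩ := ContinuousMap.exists_frequently_le_abs hgM hd (half_pos hε)
  have hosc : c - ε ≤ limOsc fun k => f k x := by
    refine le_limOsc (abs_apply_le_of_norm_le hM x) fun n => ?_
    obtain ⟨k, hnk, hk⟩ := frequently_atTop.mp hx n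
    simp only [g, ContinuousMap.sub_apply] at hk
    exact ⟨I k, J k, hnk.trans (hI k), hnk.trans (hJ k), by linarith⟩
  have hbdd : BddAbove (range fun x => limOsc fun k => f k x) :=
    ⟨2 * M, by rintro _ ⟨y, rfl⟩; exact limOsc_le (abs_apply_le_of_norm_le hM y)⟩
  linarith [le_ciSup hbdd x]

theorem deltaSeq_eq_iSup_limOsc_eval (hM : ∀ k, ‖f k‖ ≤ M) :
    deltaSeq f = ⨆ x, limOsc fun k => f k x :=
  le_antisymm
    (Real.iSup_le (fun φ => limOsc_apply_le_iSup_limOsc_eval hM (mem_closedBall_zero_iff.mp φ.2))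
      (Real.iSup_nonneg fun _ => limOsc_nonneg))
    (Real.iSup_le (limOsc_eval_le_deltaSeq hM) (deltaSeq_nonneg f))

end ContinuousFunctions

open MeasureTheory in
theorem exists_isCompact_tendstoUniformlyOn {α : Type*} [TopologicalSpace α] [T2Space α]
    [MeasurableSpace α] [OpensMeasurableSpace α] (μ : Measure α) [IsFiniteMeasure μ]
    [μ.InnerRegularCompactLTTop] {F : ℕ → α → ℝ} {G : α → ℝ} (hF : ∀ n, Measurable (F n))
    (hG : Measurable G) (hlim : ∀ x, Tendsto (fun n => F n x) atTop (𝓝 (G x)))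
    {ε : ℝ} (hε : 0 < ε) :
    ∃ L, IsCompact L ∧ μ Lᶜ ≤ ENNReal.ofReal ε ∧ TendstoUniformlyOn F G atTop L := by
  obtain ⟨t, ht, hμt, hunif⟩ := tendstoUniformlyOn_of_ae_tendsto'
    (fun n => (hF n).stronglyMeasurable) hG.stronglyMeasurable (ae_of_all μ hlim) (half_pos hε)
  obtain ⟨L, hLt, hL, hμL⟩ := ht.compl.exists_isCompact_sdiff_lt (measure_ne_top μ _)
    (ENNReal.ofReal_pos.mpr (half_pos hε)).ne'
  refine ⟨L, hL, ?_, hunif.mono hLt⟩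
  calc μ Lᶜ ≤ μ (t ∪ tᶜ \ L) := measure_mono fun x hx => (em (x ∈ t)).imp id fun h => ⟨h, hx⟩
    _ ≤ μ t + μ (tᶜ \ L) := measure_union_le _ _
    _ ≤ ENNReal.ofReal (ε / 2) + ENNReal.ofReal (ε / 2) := add_le_add hμt hμL.le
    _ = ENNReal.ofReal ε := by rw [← ENNReal.ofReal_add (by positivity) (by positivity), add_halves]

theorem exists_isCompact_iInf_sSup_le_deltaSeq {K : Type*} [TopologicalSpace K] [CompactSpace K]
    [T2Space K] [MeasurableSpace K] [BorelSpace K] {f : ℕ → C(K, ℝ)} {M : ℝ}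
    (hM : ∀ k, ‖f k‖ ≤ M) (μ : MeasureTheory.Measure K) [MeasureTheory.IsFiniteMeasure μ]
    [μ.InnerRegularCompactLTTop] {ε : ℝ} (hε : 0 < ε) :
    ∃ L : Set K, IsCompact L ∧ μ Lᶜ ≤ ENNReal.ofReal ε ∧
      (⨅ n : ℕ, sSup {r : ℝ | ∃ i j : ℕ, n ≤ i ∧ n ≤ j ∧ ∃ x ∈ L, r = |f i x - f j x|}) ≤
        deltaSeq f := by
  have hmeas := measurable_tailOsc fun k => (f k).continuous.measurable
  obtain ⟨L, hL, hμL, hunif⟩ := exists_isCompact_tendstoUniformlyOn μ hmeas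
    (G := fun x => limOsc fun k => f k x) (Measurable.iInf hmeas)
    (fun x => tendsto_tailOsc (abs_apply_le_of_norm_le hM x)) hε
  refine ⟨L, hL, hμL, le_of_forall_pos_le_add fun η hη => ?_⟩
  obtain ⟨n, hn⟩ := (Metric.tendstoUniformlyOn_iff.mp hunif η hη).exists
  have hbdd : BddBelow (range fun n => sSup
      {r : ℝ | ∃ i j : ℕ, n ≤ i ∧ n ≤ j ∧ ∃ x ∈ L, r = |f i x - f j x|}) :=
    ⟨0, by
      rintro _ ⟨m, rfl⟩
      exact Real.sSup_nonneg (by rintro _ ⟨i, j, -, -, x, -, rfl⟩; exact abs_nonneg _)⟩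
  refine (ciInf_le hbdd n).trans (Real.sSup_le ?_ (by linarith [deltaSeq_nonneg f]))
  rintro _ ⟨i, j, hi, hj, x, hx, rfl⟩
  have hclose := abs_lt.mp (Real.dist_eq _ _ ▸ hn x hx)
  calc |f i x - f j x| ≤ tailOsc (fun k => f k x) n :=
        abs_sub_le_tailOsc (abs_apply_le_of_norm_le hM x) hi hj
    _ ≤ deltaSeq f + η := by linarith [limOsc_eval_le_deltaSeq hM x]

/-- For a bounded sequence `(f_n)` in `C(K)`:
(i) `δ(f_n) = sup_{x∈K} inf_n sup_{i,j≥n} |f_i(x) − f_j(x)|`, and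
(ii) a quantitative Egoroff theorem. -/
theorem statement18 {K : Type*} [TopologicalSpace K] [CompactSpace K] [T2Space K]
    [MeasurableSpace K] [BorelSpace K]
    (f : ℕ → C(K, ℝ)) (hf : ∃ M : ℝ, ∀ n, ‖f n‖ ≤ M) :
    (deltaSeq f = ⨆ x : K, ⨅ n : ℕ,
      sSup {r : ℝ | ∃ i j : ℕ, n ≤ i ∧ n ≤ j ∧ r = |f i x - f j x|}) ∧
    (∀ (μ : MeasureTheory.Measure K), MeasureTheory.IsFiniteMeasure μ → μ.Regular →
      ∀ ε : ℝ, 0 < ε → ∃ L : Set K, IsCompact L ∧ μ Lᶜ ≤ ENNReal.ofReal ε ∧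
        (⨅ n : ℕ, sSup {r : ℝ | ∃ i j : ℕ, n ≤ i ∧ n ≤ j ∧
          ∃ x ∈ L, r = |f i x - f j x|}) ≤ deltaSeq f) := by
  obtain ⟨M, hM⟩ := hf
  exact ⟨deltaSeq_eq_iSup_limOsc_eval hM,
    fun μ _ _ _ hε => exists_isCompact_iInf_sSup_le_deltaSeq hM μ hε⟩

end
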